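/- arXiv:1402.1298 — 5 statements merged into one kernel-verified Lean document; each statement's English description precedes it below -/
import Mathlib

section
/- Theorem (Bethe/AMP correspondence). Fix positive integers N, M, P and observations y ∈ ℝ^{M×P}. Suppose Σ ∈ (0,∞)^{N×P}, T ∈ ℝ^{N×P}, Z ∈ (0,∞)^{M×N}, W ∈ ℝ^{M×N}, ω ∈ ℝ^{M×P}, a, c ∈ ℝ^{N×P}, r, s ∈ ℝ^{M×N} with c ≥ 0, s ≥ 0 satisfy the AMP fixed-point equations: (i) a_{il} = f_a(Σ_{il},T_{il}), c_{il} = f_c(Σ_{il},T_{il}), r_{μi} = f_r(Z_{μi},W_{μi}), s_{μi} = f_s(Z_{μi},W_{μi}) for all i,l,μ; (ii) setting V_{μl} := N^{-1} Σ_j (c_{jl} s_{μj} + c_{jl} r_{μj}² + a_{jl}² s_{μj}) and assuming D_{μl} := V_{μl} − N^{-1} Σ_j s_{μj} c_{jl} > 0, we have g_out(ω_{μl}, y_{μl}, V_{μl}) + (ω_{μl} − N^{-1/2} Σ_j r_{μj} a_{jl})/D_{μl} = 0; (iii) Σ_{il}^{-1} = −N^{-1} Σ_μ [∂_ω g_out(ω_{μl},y_{μl},V_{μl})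 (r_{μi}² + s_{μi}) + g_out(ω_{μl},y_{μl},V_{μl})² s_{μi}] and T_{il} = Σ_{il} [N^{-1/2} Σ_μ g_out(ω_{μl},y_{μl},V_{μl}) r_{μi} − a_{il} N^{-1} Σ_μ r_{μi}² ∂_ω g_out(ω_{μl},y_{μl},V_{μl}) − a_{il} N^{-1} Σ_μ s_{μi} g_out(ω_{μl},y_{μl},V_{μl})²]; (iv) Z_{μi}^{-1} = −N^{-1} Σ_l [∂_ω g_out(ω_{μl},y_{μl},V_{μl}) (a_{il}² + c_{il}) + g_out(ω_{μl},y_{μl},V_{μl})² c_{il}] and W_{μi} = Z_{μi} [N^{-1/2} Σ_l g_out(ω_{μl},y_{μl},V_{μl}) a_{il} − r_{μi} N^{-1} Σ_l a_{il}² ∂_ω g_out(ω_{μl},y_{μl},V_{μl}) − r_{μi} N^{-1} Σ_l c_{il} g_out(ω_{μl},y_{μl},V_{μl})²]. Then (T,Σ,W,Z,ω,a,c,r,s) is a stationary point of the fixed-point-generating Bethe free entropy Φ^Bethe_AMP: every partial derivative of Φ^Bethe_AMP with respect to each of the variables T_{il}, Σ_{il}, W_{μi}, Z_{μi}, ω_{μl},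 a_{il}, c_{il}, r_{μi}, s_{μi} vanishes at this point. -/
open MeasureTheory

noncomputable section

/-- The tilted partition function `Ẑ_X(Σ,T) = ∫ e^{-(x-T)²/(2Σ)} dP_X(x)`. -/
def ZhatX (PX : Measure ℝ) (S T : ℝ) : ℝ :=
  ∫ x, Real.exp (-(x - T) ^ 2 / (2 * S)) ∂PX

/-- The input mean function `f_a(Σ,T)` associated with the prior `P_X`. -/
def fa (PX : Measure ℝ) (S T : ℝ) : ℝ :=
  (∫ x, x * Real.exp (-(x - T) ^ 2 / (2 * S)) ∂PX) / ZhatX PX S T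

/-- The input variance function `f_c(Σ,T)` associated with the prior `P_X`. -/
def fc (PX : Measure ℝ) (S T : ℝ) : ℝ :=
  (∫ x, x ^ 2 * Real.exp (-(x - T) ^ 2 / (2 * S)) ∂PX) / ZhatX PX S T - (fa PX S T) ^ 2

/-- The tilted partition function `Ẑ_F(Z,W) = ∫ e^{-(√N F − W)²/(2Z)} dP_F(F)`. -/
def ZhatF (PF : Measure ℝ) (N : ℕ) (Z W : ℝ) : ℝ :=
  ∫ F, Real.exp (-(Real.sqrt N * F - W) ^ 2 / (2 * Z)) ∂PF

/-- The input mean function `f_r(Z,W)` associated with the prior `P_F`. -/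
def fr (PF : Measure ℝ) (N : ℕ) (Z W : ℝ) : ℝ :=
  Real.sqrt N * (∫ F, F * Real.exp (-(Real.sqrt N * F - W) ^ 2 / (2 * Z)) ∂PF) /
    ZhatF PF N Z W

/-- The input variance function `f_s(Z,W)` associated with the prior `P_F`. -/
def fs (PF : Measure ℝ) (N : ℕ) (Z W : ℝ) : ℝ :=
  (N : ℝ) * (∫ F, F ^ 2 * Real.exp (-(Real.sqrt N * F - W) ^ 2 / (2 * Z)) ∂PF) /
    ZhatF PF N Z W - (fr PF N Z W) ^ 2

/-- The output function `g_out(ω, y, V)` of the output channel with density `p(y,z)`. -/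
def gout (p : ℝ → ℝ → ℝ) (ω y V : ℝ) : ℝ :=
  (∫ z, (z - ω) * p y z * Real.exp (-(z - ω) ^ 2 / (2 * V))) /
    (V * ∫ z, p y z * Real.exp (-(z - ω) ^ 2 / (2 * V)))

/-- The partial derivative `∂_ω g_out(ω, y, V)`. -/
def dgout (p : ℝ → ℝ → ℝ) (ω y V : ℝ) : ℝ :=
  deriv (fun w => gout p w y V) ω

/-- The local partition function `Z^{μl}(ω,V) = (2πV)^{-1/2} ∫ p(y,z) e^{-(z-ω)²/(2V)} dz`. -/
def Zout (p : ℝ → ℝ → ℝ) (y ω V : ℝ) : ℝ :=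
  (Real.sqrt (2 * Real.pi * V))⁻¹ * ∫ z, p y z * Real.exp (-(z - ω) ^ 2 / (2 * V))

/-- The variance estimate
`V_{μl}(a,c,r,s) = N^{-1} Σ_j (c_{jl} s_{μj} + c_{jl} r_{μj}² + a_{jl}² s_{μj})`. -/
def Vml {N M P : ℕ} (a c : Fin N → Fin P → ℝ) (r s : Fin M → Fin N → ℝ)
    (μ : Fin M) (l : Fin P) : ℝ :=
  (1 / (N : ℝ)) * ∑ j, (c j l * s μ j + c j l * (r μ j) ^ 2 + (a j l) ^ 2 * s μ j)

/-- The fixed-point-generating Bethe free entropy `Φ^Bethe_AMP(T,Σ,W,Z,ω,a,c,r,s)`. -/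
def PhiBetheAMP (PX PF : Measure ℝ) (p : ℝ → ℝ → ℝ) (N M P : ℕ)
    (y : Fin M → Fin P → ℝ)
    (T S : Fin N → Fin P → ℝ) (W Z : Fin M → Fin N → ℝ)
    (ω : Fin M → Fin P → ℝ)
    (a c : Fin N → Fin P → ℝ) (r s : Fin M → Fin N → ℝ) : ℝ :=
  (∑ i, ∑ l, (Real.log (ZhatX PX (S i l) (T i l))
      + (c i l + (a i l - T i l) ^ 2) / (2 * S i l)))
  + (∑ μ, ∑ i, (Real.log (ZhatF PF N (Z μ i) (W μ i))
      + (s μ i + (r μ i - W μ i) ^ 2) / (2 * Z μ i)))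
  + (∑ μ, ∑ l, (Real.log (Zout p (y μ l) (ω μ l) (Vml a c r s μ l))
      + (1 / 2) * (ω μ l - (Real.sqrt N)⁻¹ * ∑ i, r μ i * a i l) ^ 2
          / (Vml a c r s μ l - (1 / (N : ℝ)) * ∑ i, s μ i * c i l)))

/-- Update a single entry `(i,l)` of a matrix (seen as a function of two indices). -/
def upd {α β : Type*} [DecidableEq α] [DecidableEq β]
    (f : α → β → ℝ) (i : α) (l : β) (v : ℝ) : α → β → ℝ :=
  fun i' l' => if i' = i ∧ l' = l then v else f i' l'

/-!
`Φ^Bethe_AMP` is a sum of one input term per entry `(i,l)`, one per entry `(μ,i)` and one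
output term per `(μ,l)`, so each partial derivative only sees a few summands. The identities for
`∂ log Ẑ_X` and `∂ log Ẑ_F` make the derivatives in `T, Σ, W, Z` differences such as
`(f_a - a)/Σ`, which vanish by (i), and the derivative in `ω` is `g_out + (ω - m)/D`, which is
(ii). For `a, c, r, s` the chain rule runs through `V`, the mean `m = N^{-1/2} Σ_i r_{μi} a_{il}`
and `D`; rewriting (ii) as `ω - m = -g_out D` collapses each derivative to a combination of
`g_out` and `∂_ω g_out` that vanishes by (iii) or (iv).
-/

open Finset

section Upd

variable {α β : Type*} [DecidableEq α] [DecidableEq β]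

@[simp]
theorem upd_self (f : α → β → ℝ) (i : α) (l : β) (v : ℝ) : upd f i l v i l = v := by
  simp [upd]

@[simp]
theorem upd_eq_self (f : α → β → ℝ) (i : α) (l : β) : upd f i l (f i l) = f := by
  funext i' l'
  by_cases h : i' = i ∧ l' = l
  · obtain ⟨rfl, rfl⟩ := h
    simp
  · simp [upd, h]

end Upd

theorem hasDerivAt_sum_of_forall_ne_const {ι : Type*} [Fintype ι] [DecidableEq ι]
    {F : ι → ℝ → ℝ} {k : ι} {d x : ℝ} (hk : HasDerivAt (F k) d x)
    (hconst : ∀ j ≠ k, ∀ v, F j v = F j x) : HasDerivAt (fun v => ∑ j, F j v) d x := by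
  have h : ∀ j ∈ univ, HasDerivAt (F j) (if j = k then d else 0) x := by
    intro j _
    split_ifs with hj
    · exact hj ▸ hk
    · exact (hasDerivAt_const x (F j x)).congr_of_eventuallyEq
        (Filter.Eventually.of_forall (hconst j hj))
  simpa using HasDerivAt.fun_sum h

theorem hasDerivAt_sum_sum_upd {α β : Type*} [Fintype α] [Fintype β] [DecidableEq α]
    [DecidableEq β] (F : α → β → ℝ → ℝ) (X : α → β → ℝ) (i : α) (l : β) {d : ℝ}
    (h : HasDerivAt (F i l) d (X i l)) :
    HasDerivAt (fun v => ∑ i', ∑ l', F i' l' (upd X i l v i' l')) d (X i l) := by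
  refine hasDerivAt_sum_of_forall_ne_const (k := i) ?_ fun i' hi' v => by simp [upd, hi']
  refine hasDerivAt_sum_of_forall_ne_const (k := l) ?_ fun l' hl' v => by simp [upd, hl']
  simpa only [upd_self] using h

theorem hasDerivAt_const_mul_sum_mul_upd {α β : Type*} [Fintype α] [DecidableEq α]
    [DecidableEq β] (f : α → ℝ) (X : α → β → ℝ) (i : α) (l : β) (κ x : ℝ) :
    HasDerivAt (fun v => κ * ∑ j, f j * upd X i l v j l) (κ * f i) x := by
  refine HasDerivAt.const_mul κ (hasDerivAt_sum_of_forall_ne_const (k := i) ?_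
    fun j hj v => by simp [upd, hj])
  simpa only [upd_self, mul_one] using (hasDerivAt_id' x).const_mul (f i)

theorem hasDerivAt_const_mul_sum_upd_mul {α β : Type*} [DecidableEq α] [Fintype β]
    [DecidableEq β] (f : β → ℝ) (X : α → β → ℝ) (μ : α) (i : β) (κ x : ℝ) :
    HasDerivAt (fun v => κ * ∑ j, upd X μ i v μ j * f j) (κ * f i) x := by
  refine HasDerivAt.const_mul κ (hasDerivAt_sum_of_forall_ne_const (k := i) ?_
    fun j hj v => by simp [upd, hj])
  simpa only [upd_self, one_mul] using (hasDerivAt_id' x).mul_const (f i)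

def inputTerm (L : ℝ → ℝ → ℝ) (S T a c : ℝ) : ℝ :=
  L S T + (c + (a - T) ^ 2) / (2 * S)

def outputTerm (L : ℝ → ℝ → ℝ) (ω V m D : ℝ) : ℝ :=
  L ω V + 1 / 2 * (ω - m) ^ 2 / D

section Terms

variable {L : ℝ → ℝ → ℝ}

theorem hasDerivAt_inputTerm_T {S T a c : ℝ} (hL : HasDerivAt (L S) ((a - T) / S) T) :
    HasDerivAt (fun t => inputTerm L S t a c) 0 T := by
  have hq := (((hasDerivAt_id' T).const_sub a).fun_pow 2).const_add c |>.div_const (2 * S)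
  refine (hL.add hq).congr_deriv ?_
  ring

theorem hasDerivAt_inputTerm_S {S T a c : ℝ} (hS : S ≠ 0)
    (hL : HasDerivAt (fun s => L s T) ((c + (a - T) ^ 2) / (2 * S ^ 2)) S) :
    HasDerivAt (fun s => inputTerm L s T a c) 0 S := by
  have hq := (hasDerivAt_const S (c + (a - T) ^ 2)).div ((hasDerivAt_id' S).const_mul 2)
    (mul_ne_zero two_ne_zero hS)
  refine (hL.add hq).congr_deriv ?_
  field_simp
  ring

theorem hasDerivAt_inputTerm_a {S T a c : ℝ} :
    HasDerivAt (fun x => inputTerm L S T x c) ((a - T) / S) a := by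
  have hq := (((hasDerivAt_id' a).sub_const T).fun_pow 2).const_add c |>.div_const (2 * S)
  refine (hq.const_add (L S T)).congr_deriv ?_
  ring

theorem hasDerivAt_inputTerm_c {S T a c : ℝ} :
    HasDerivAt (fun x => inputTerm L S T a x) (1 / (2 * S)) c :=
  (((hasDerivAt_id' c).add_const ((a - T) ^ 2)).div_const (2 * S)).const_add (L S T)

theorem hasDerivAt_outputTerm_ω {ω V m D g : ℝ} (hL : HasDerivAt (fun w => L w V) g ω)
    (hfix : g + (ω - m) / D = 0) : HasDerivAt (fun w => outputTerm L w V m D) 0 ω := by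
  have hq := ((((hasDerivAt_id' ω).sub_const m).fun_pow 2).const_mul (1 / 2)).div_const D
  refine (hL.add hq).congr_deriv ?_
  rw [← hfix]
  ring

theorem HasDerivAt.outputTerm_comp {ω g g' x V' m' D' : ℝ} {V m D : ℝ → ℝ}
    (hL : HasDerivAt (L ω) (1 / 2 * (g ^ 2 + g')) (V x)) (hV : HasDerivAt V V' x)
    (hm : HasDerivAt m m' x) (hD : HasDerivAt D D' x) (hD0 : D x ≠ 0)
    (hfix : g + (ω - m x) / D x = 0) :
    HasDerivAt (fun v => outputTerm L ω (V v) (m v) (D v))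
      (1 / 2 * (g ^ 2 + g') * V' - 1 / 2 * g ^ 2 * D' + g * m') x := by
  have hu : ω - m x = -g * D x := by
    field_simp at hfix
    linarith
  have hq := (((hm.const_sub ω).fun_pow 2).const_mul (1 / 2)).div hD hD0
  refine ((hL.comp x hV).add hq).congr_deriv ?_
  rw [hu]
  field_simp
  ring

theorem HasDerivAt.outputTerm_comp_of_const_mean {ω g g' x V' D' m : ℝ} {V D : ℝ → ℝ}
    (hL : HasDerivAt (L ω) (1 / 2 * (g ^ 2 + g')) (V x)) (hV : HasDerivAt V V' x)
    (hD : HasDerivAt D D' x) (hD0 : D x ≠ 0) (hfix : g + (ω - m) / D x = 0) :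
    HasDerivAt (fun v => outputTerm L ω (V v) m (D v))
      (1 / 2 * (g ^ 2 + g') * V' - 1 / 2 * g ^ 2 * D') x := by
  simpa using hL.outputTerm_comp hV (hasDerivAt_const x m) hD hD0 hfix

end Terms

section Vml

variable {N M P : ℕ} {a c : Fin N → Fin P → ℝ} {r s : Fin M → Fin N → ℝ}

theorem Vml_pos {μ : Fin M} {l : Fin P} (hc : ∀ j, 0 ≤ c j l) (hs : ∀ j, 0 ≤ s μ j)
    (hD : 0 < Vml a c r s μ l - 1 / (N : ℝ) * ∑ j, s μ j * c j l) : 0 < Vml a c r s μ l := by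
  have : 0 ≤ 1 / (N : ℝ) * ∑ j, s μ j * c j l :=
    mul_nonneg (by positivity) (sum_nonneg fun j _ => mul_nonneg (hs j) (hc j))
  linarith

variable (μ : Fin M) (i : Fin N) (l : Fin P) (x : ℝ)

theorem hasDerivAt_Vml_upd_a :
    HasDerivAt (fun v => Vml (upd a i l v) c r s μ l) (1 / N * (2 * x * s μ i)) x := by
  refine HasDerivAt.const_mul _ (hasDerivAt_sum_of_forall_ne_const (k := i) ?_
    fun j hj v => by simp [upd, hj])
  simp only [upd_self]
  refine (((hasDerivAt_pow 2 x).mul_const (s μ i)).const_add _).congr_deriv ?_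
  ring

theorem hasDerivAt_Vml_upd_c :
    HasDerivAt (fun v => Vml a (upd c i l v) r s μ l) (1 / N * (s μ i + r μ i ^ 2)) x := by
  refine HasDerivAt.const_mul _ (hasDerivAt_sum_of_forall_ne_const (k := i) ?_
    fun j hj v => by simp [upd, hj])
  simp only [upd_self]
  refine ((((hasDerivAt_id' x).mul_const (s μ i)).add
    ((hasDerivAt_id' x).mul_const (r μ i ^ 2))).add_const _).congr_deriv ?_
  ring

theorem hasDerivAt_Vml_upd_r :
    HasDerivAt (fun v => Vml a c (upd r μ i v) s μ l) (1 / N * (2 * x * c i l)) x := by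
  refine HasDerivAt.const_mul _ (hasDerivAt_sum_of_forall_ne_const (k := i) ?_
    fun j hj v => by simp [upd, hj])
  simp only [upd_self]
  refine ((((hasDerivAt_pow 2 x).const_mul (c i l)).const_add _).add_const _).congr_deriv ?_
  ring

theorem hasDerivAt_Vml_upd_s :
    HasDerivAt (fun v => Vml a c r (upd s μ i v) μ l) (1 / N * (c i l + a i l ^ 2)) x := by
  refine HasDerivAt.const_mul _ (hasDerivAt_sum_of_forall_ne_const (k := i) ?_
    fun j hj v => by simp [upd, hj])
  simp only [upd_self]
  refine ((((hasDerivAt_id' x).const_mul (c i l)).add_const _).add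
    ((hasDerivAt_id' x).const_mul (a i l ^ 2))).congr_deriv ?_
  ring

end Vml

theorem mean_stationarity_of_fixedPoint {ι : Type*} [Fintype ι] {a T S κ θ : ℝ}
    {r s g g' : ι → ℝ} (hS : S ≠ 0)
    (hSinv : S⁻¹ = -κ * ∑ μ, (g' μ * (r μ ^ 2 + s μ) + g μ ^ 2 * s μ))
    (hT : T = S * (θ * ∑ μ, g μ * r μ - a * (κ * ∑ μ, r μ ^ 2 * g' μ)
      - a * (κ * ∑ μ, s μ * g μ ^ 2))) :
    (a - T) / S + ∑ μ, (1 / 2 * (g μ ^ 2 + g' μ) * (κ * (2 * a * s μ))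
      - 1 / 2 * g μ ^ 2 * (κ * (2 * a * s μ)) + g μ * (θ * r μ)) = 0 := by
  rw [hT, sub_div, mul_div_cancel_left₀ _ hS, div_eq_mul_inv, hSinv]
  simp only [mul_sum, ← sum_sub_distrib, ← sum_add_distrib]
  exact sum_eq_zero fun μ _ => by ring

theorem variance_stationarity_of_fixedPoint {ι : Type*} [Fintype ι] {S κ : ℝ}
    {r s g g' : ι → ℝ} (hSinv : S⁻¹ = -κ * ∑ μ, (g' μ * (r μ ^ 2 + s μ) + g μ ^ 2 * s μ)) :
    1 / (2 * S) + ∑ μ, (1 / 2 * (g μ ^ 2 + g' μ) * (κ * (s μ + r μ ^ 2))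
      - 1 / 2 * g μ ^ 2 * (κ * (s μ + r μ ^ 2) - κ * s μ)) = 0 := by
  rw [one_div, mul_inv, hSinv]
  simp only [mul_sum, ← sum_add_distrib]
  exact sum_eq_zero fun μ _ => by ring

section Bethe

variable {N M P : ℕ} {PX PF : Measure ℝ} {p : ℝ → ℝ → ℝ} {y : Fin M → Fin P → ℝ}
  {T S a c : Fin N → Fin P → ℝ} {W Z r s : Fin M → Fin N → ℝ} {ω : Fin M → Fin P → ℝ}

theorem PhiBetheAMP_eq :
    PhiBetheAMP PX PF p N M P y T S W Z ω a c r s =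
      ∑ i, ∑ l, inputTerm (fun σ t => Real.log (ZhatX PX σ t)) (S i l) (T i l) (a i l) (c i l)
      + ∑ μ, ∑ i, inputTerm (fun ζ w => Real.log (ZhatF PF N ζ w)) (Z μ i) (W μ i) (r μ i)
          (s μ i)
      + ∑ μ, ∑ l, outputTerm (fun w V => Real.log (Zout p (y μ l) w V)) (ω μ l)
          (Vml a c r s μ l) ((Real.sqrt N)⁻¹ * ∑ i, r μ i * a i l)
          (Vml a c r s μ l - 1 / (N : ℝ) * ∑ i, s μ i * c i l) :=
  rfl

theorem PhiBetheAMP_hasDerivAt_a (g g' : Fin M → Fin P → ℝ) (i : Fin N) (l : Fin P)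
    (hS : S i l ≠ 0) (hD : ∀ μ, Vml a c r s μ l - 1 / (N : ℝ) * ∑ j, s μ j * c j l ≠ 0)
    (hL : ∀ μ, HasDerivAt (fun V => Real.log (Zout p (y μ l) (ω μ l) V))
      (1 / 2 * (g μ l ^ 2 + g' μ l)) (Vml a c r s μ l))
    (hfix : ∀ μ, g μ l + (ω μ l - (Real.sqrt N)⁻¹ * ∑ j, r μ j * a j l)
      / (Vml a c r s μ l - 1 / (N : ℝ) * ∑ j, s μ j * c j l) = 0)
    (hSinv : (S i l)⁻¹ =
      -(1 / (N : ℝ)) * ∑ μ, (g' μ l * (r μ i ^ 2 + s μ i) + g μ l ^ 2 * s μ i))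
    (hT : T i l = S i l * ((Real.sqrt N)⁻¹ * (∑ μ, g μ l * r μ i)
      - a i l * (1 / (N : ℝ) * ∑ μ, r μ i ^ 2 * g' μ l)
      - a i l * (1 / (N : ℝ) * ∑ μ, s μ i * g μ l ^ 2))) :
    HasDerivAt (fun v => PhiBetheAMP PX PF p N M P y T S W Z ω (upd a i l v) c r s) 0
      (a i l) := by
  simp only [PhiBetheAMP_eq]
  refine HasDerivAt.congr_deriv (HasDerivAt.add (HasDerivAt.add_const _
    (hasDerivAt_sum_sum_upd (fun i' l' x => inputTerm (fun σ t => Real.log (ZhatX PX σ t))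
      (S i' l') (T i' l') x (c i' l')) a i l hasDerivAt_inputTerm_a))
    (HasDerivAt.fun_sum fun μ _ => ?_)) (mean_stationarity_of_fixedPoint hS hSinv hT)
  refine hasDerivAt_sum_of_forall_ne_const (k := l) ?_ fun l' hl' v => by simp [upd, hl', Vml]
  refine HasDerivAt.outputTerm_comp ?_ (hasDerivAt_Vml_upd_a μ i l _)
    (hasDerivAt_const_mul_sum_mul_upd (r μ) a i l _ _)
    ((hasDerivAt_Vml_upd_a μ i l _).sub_const _) ?_ ?_ <;> simp only [upd_eq_self]
  exacts [hL μ, hD μ, hfix μ]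


theorem PhiBetheAMP_hasDerivAt_T (i : Fin N) (l : Fin P)
    (hL : HasDerivAt (fun t => Real.log (ZhatX PX (S i l) t)) ((a i l - T i l) / S i l) (T i l)) :
    HasDerivAt (fun v => PhiBetheAMP PX PF p N M P y (upd T i l v) S W Z ω a c r s) 0
      (T i l) := by
  simp only [PhiBetheAMP_eq]
  exact ((hasDerivAt_sum_sum_upd (fun i' l' t => inputTerm (fun σ t => Real.log (ZhatX PX σ t))
    (S i' l') t (a i' l') (c i' l')) T i l (hasDerivAt_inputTerm_T hL)).add_const _).add_const _

theorem PhiBetheAMP_hasDerivAt_S (i : Fin N) (l : Fin P) (hS : S i l ≠ 0)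
    (hL : HasDerivAt (fun σ => Real.log (ZhatX PX σ (T i l)))
      ((c i l + (a i l - T i l) ^ 2) / (2 * S i l ^ 2)) (S i l)) :
    HasDerivAt (fun v => PhiBetheAMP PX PF p N M P y T (upd S i l v) W Z ω a c r s) 0
      (S i l) := by
  simp only [PhiBetheAMP_eq]
  exact ((hasDerivAt_sum_sum_upd (fun i' l' σ => inputTerm (fun σ t => Real.log (ZhatX PX σ t))
    σ (T i' l') (a i' l') (c i' l')) S i l (hasDerivAt_inputTerm_S hS hL)).add_const _).add_const _

theorem PhiBetheAMP_hasDerivAt_W (μ : Fin M) (i : Fin N)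
    (hL : HasDerivAt (fun w => Real.log (ZhatF PF N (Z μ i) w)) ((r μ i - W μ i) / Z μ i)
      (W μ i)) :
    HasDerivAt (fun v => PhiBetheAMP PX PF p N M P y T S (upd W μ i v) Z ω a c r s) 0
      (W μ i) := by
  simp only [PhiBetheAMP_eq]
  exact ((hasDerivAt_sum_sum_upd (fun μ' i' w => inputTerm (fun ζ w => Real.log (ZhatF PF N ζ w))
    (Z μ' i') w (r μ' i') (s μ' i')) W μ i (hasDerivAt_inputTerm_T hL)).const_add _).add_const _

theorem PhiBetheAMP_hasDerivAt_Z (μ : Fin M) (i : Fin N) (hZ : Z μ i ≠ 0)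
    (hL : HasDerivAt (fun ζ => Real.log (ZhatF PF N ζ (W μ i)))
      ((s μ i + (r μ i - W μ i) ^ 2) / (2 * Z μ i ^ 2)) (Z μ i)) :
    HasDerivAt (fun v => PhiBetheAMP PX PF p N M P y T S W (upd Z μ i v) ω a c r s) 0
      (Z μ i) := by
  simp only [PhiBetheAMP_eq]
  exact ((hasDerivAt_sum_sum_upd (fun μ' i' ζ => inputTerm (fun ζ w => Real.log (ZhatF PF N ζ w))
    ζ (W μ' i') (r μ' i') (s μ' i')) Z μ i (hasDerivAt_inputTerm_S hZ hL)).const_add _).add_const _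

theorem PhiBetheAMP_hasDerivAt_ω {g : ℝ} (μ : Fin M) (l : Fin P)
    (hL : HasDerivAt (fun w => Real.log (Zout p (y μ l) w (Vml a c r s μ l))) g (ω μ l))
    (hfix : g + (ω μ l - (Real.sqrt N)⁻¹ * ∑ j, r μ j * a j l)
      / (Vml a c r s μ l - 1 / (N : ℝ) * ∑ j, s μ j * c j l) = 0) :
    HasDerivAt (fun v => PhiBetheAMP PX PF p N M P y T S W Z (upd ω μ l v) a c r s) 0
      (ω μ l) := by
  simp only [PhiBetheAMP_eq]
  exact (hasDerivAt_sum_sum_upd (fun μ' l' w => outputTerm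
    (fun w V => Real.log (Zout p (y μ' l') w V)) w (Vml a c r s μ' l')
    ((Real.sqrt N)⁻¹ * ∑ j, r μ' j * a j l') (Vml a c r s μ' l' - 1 / (N : ℝ) * ∑ j, s μ' j * c j l'))
    ω μ l (hasDerivAt_outputTerm_ω hL hfix)).const_add _

theorem PhiBetheAMP_hasDerivAt_c (g g' : Fin M → Fin P → ℝ) (i : Fin N) (l : Fin P)
    (hD : ∀ μ, Vml a c r s μ l - 1 / (N : ℝ) * ∑ j, s μ j * c j l ≠ 0)
    (hL : ∀ μ, HasDerivAt (fun V => Real.log (Zout p (y μ l) (ω μ l) V))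
      (1 / 2 * (g μ l ^ 2 + g' μ l)) (Vml a c r s μ l))
    (hfix : ∀ μ, g μ l + (ω μ l - (Real.sqrt N)⁻¹ * ∑ j, r μ j * a j l)
      / (Vml a c r s μ l - 1 / (N : ℝ) * ∑ j, s μ j * c j l) = 0)
    (hSinv : (S i l)⁻¹ =
      -(1 / (N : ℝ)) * ∑ μ, (g' μ l * (r μ i ^ 2 + s μ i) + g μ l ^ 2 * s μ i)) :
    HasDerivAt (fun v => PhiBetheAMP PX PF p N M P y T S W Z ω a (upd c i l v) r s) 0
      (c i l) := by
  simp only [PhiBetheAMP_eq]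
  refine HasDerivAt.congr_deriv (HasDerivAt.add (HasDerivAt.add_const _
    (hasDerivAt_sum_sum_upd (fun i' l' x => inputTerm (fun σ t => Real.log (ZhatX PX σ t))
      (S i' l') (T i' l') (a i' l') x) c i l hasDerivAt_inputTerm_c))
    (HasDerivAt.fun_sum fun μ _ => ?_)) (variance_stationarity_of_fixedPoint hSinv)
  refine hasDerivAt_sum_of_forall_ne_const (k := l) ?_ fun l' hl' v => by simp [upd, hl', Vml]
  refine HasDerivAt.outputTerm_comp_of_const_mean ?_ (hasDerivAt_Vml_upd_c μ i l _)
    ((hasDerivAt_Vml_upd_c μ i l _).sub (hasDerivAt_const_mul_sum_mul_upd (s μ) c i l _ _))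
    ?_ ?_ <;> simp only [upd_eq_self]
  exacts [hL μ, hD μ, hfix μ]

theorem PhiBetheAMP_hasDerivAt_r (g g' : Fin M → Fin P → ℝ) (μ : Fin M) (i : Fin N)
    (hZ : Z μ i ≠ 0) (hD : ∀ l, Vml a c r s μ l - 1 / (N : ℝ) * ∑ j, s μ j * c j l ≠ 0)
    (hL : ∀ l, HasDerivAt (fun V => Real.log (Zout p (y μ l) (ω μ l) V))
      (1 / 2 * (g μ l ^ 2 + g' μ l)) (Vml a c r s μ l))
    (hfix : ∀ l, g μ l + (ω μ l - (Real.sqrt N)⁻¹ * ∑ j, r μ j * a j l)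
      / (Vml a c r s μ l - 1 / (N : ℝ) * ∑ j, s μ j * c j l) = 0)
    (hZinv : (Z μ i)⁻¹ =
      -(1 / (N : ℝ)) * ∑ l, (g' μ l * (a i l ^ 2 + c i l) + g μ l ^ 2 * c i l))
    (hW : W μ i = Z μ i * ((Real.sqrt N)⁻¹ * (∑ l, g μ l * a i l)
      - r μ i * (1 / (N : ℝ) * ∑ l, a i l ^ 2 * g' μ l)
      - r μ i * (1 / (N : ℝ) * ∑ l, c i l * g μ l ^ 2))) :
    HasDerivAt (fun v => PhiBetheAMP PX PF p N M P y T S W Z ω a c (upd r μ i v) s) 0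
      (r μ i) := by
  simp only [PhiBetheAMP_eq]
  refine HasDerivAt.congr_deriv (HasDerivAt.add (HasDerivAt.const_add _
    (hasDerivAt_sum_sum_upd (fun μ' i' x => inputTerm (fun ζ w => Real.log (ZhatF PF N ζ w))
      (Z μ' i') (W μ' i') x (s μ' i')) r μ i hasDerivAt_inputTerm_a))
    (hasDerivAt_sum_of_forall_ne_const (k := μ) (HasDerivAt.fun_sum fun l _ => ?_)
      fun μ' hμ' v => by simp [upd, hμ', Vml])) (mean_stationarity_of_fixedPoint hZ hZinv hW)
  refine HasDerivAt.outputTerm_comp ?_ (hasDerivAt_Vml_upd_r μ i l _)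
    (hasDerivAt_const_mul_sum_upd_mul (fun j => a j l) r μ i _ _)
    ((hasDerivAt_Vml_upd_r μ i l _).sub_const _) ?_ ?_ <;> simp only [upd_eq_self]
  exacts [hL l, hD l, hfix l]

theorem PhiBetheAMP_hasDerivAt_s (g g' : Fin M → Fin P → ℝ) (μ : Fin M) (i : Fin N)
    (hD : ∀ l, Vml a c r s μ l - 1 / (N : ℝ) * ∑ j, s μ j * c j l ≠ 0)
    (hL : ∀ l, HasDerivAt (fun V => Real.log (Zout p (y μ l) (ω μ l) V))
      (1 / 2 * (g μ l ^ 2 + g' μ l)) (Vml a c r s μ l))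
    (hfix : ∀ l, g μ l + (ω μ l - (Real.sqrt N)⁻¹ * ∑ j, r μ j * a j l)
      / (Vml a c r s μ l - 1 / (N : ℝ) * ∑ j, s μ j * c j l) = 0)
    (hZinv : (Z μ i)⁻¹ =
      -(1 / (N : ℝ)) * ∑ l, (g' μ l * (a i l ^ 2 + c i l) + g μ l ^ 2 * c i l)) :
    HasDerivAt (fun v => PhiBetheAMP PX PF p N M P y T S W Z ω a c r (upd s μ i v)) 0
      (s μ i) := by
  simp only [PhiBetheAMP_eq]
  refine HasDerivAt.congr_deriv (HasDerivAt.add (HasDerivAt.const_add _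
    (hasDerivAt_sum_sum_upd (fun μ' i' x => inputTerm (fun ζ w => Real.log (ZhatF PF N ζ w))
      (Z μ' i') (W μ' i') (r μ' i') x) s μ i hasDerivAt_inputTerm_c))
    (hasDerivAt_sum_of_forall_ne_const (k := μ) (HasDerivAt.fun_sum fun l _ => ?_)
      fun μ' hμ' v => by simp [upd, hμ', Vml])) (variance_stationarity_of_fixedPoint hZinv)
  refine HasDerivAt.outputTerm_comp_of_const_mean ?_ (hasDerivAt_Vml_upd_s μ i l _)
    ((hasDerivAt_Vml_upd_s μ i l _).sub
      (hasDerivAt_const_mul_sum_upd_mul (fun j => c j l) s μ i _ _)) ?_ ?_ <;>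
    simp only [upd_eq_self]
  exacts [hL l, hD l, hfix l]

end Bethe

theorem amp_fixed_point_is_stationary_point_of_bethe_free_entropy_general
    (N M P : ℕ) (PX PF : Measure ℝ) (p : ℝ → ℝ → ℝ) (y : Fin M → Fin P → ℝ)
    (Tm Sm am cm : Fin N → Fin P → ℝ) (Wm Zm rm sm : Fin M → Fin N → ℝ)
    (om : Fin M → Fin P → ℝ)
    -- positivity/nonnegativity of the variance-like variables
    (hSm : ∀ i l, 0 < Sm i l) (hZm : ∀ μ i, 0 < Zm μ i)
    (hcm : ∀ i l, 0 ≤ cm i l) (hsm : ∀ μ i, 0 ≤ sm μ i)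
    -- (i) input fixed-point equations
    (hfa : ∀ i l, am i l = fa PX (Sm i l) (Tm i l))
    (hfc : ∀ i l, cm i l = fc PX (Sm i l) (Tm i l))
    (hfr : ∀ μ i, rm μ i = fr PF N (Zm μ i) (Wm μ i))
    (hfs : ∀ μ i, sm μ i = fs PF N (Zm μ i) (Wm μ i))
    -- (ii) positivity of D_{μl} and the ω fixed-point equation
    (hD : ∀ μ l, 0 < Vml am cm rm sm μ l - (1 / (N : ℝ)) * ∑ i, sm μ i * cm i l)
    (hom : ∀ μ l,
      gout p (om μ l) (y μ l) (Vml am cm rm sm μ l)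
        + (om μ l - (Real.sqrt N)⁻¹ * ∑ i, rm μ i * am i l)
            / (Vml am cm rm sm μ l - (1 / (N : ℝ)) * ∑ i, sm μ i * cm i l) = 0)
    -- (iii) fixed-point equations for Σ and T
    (hSinv : ∀ i l, (Sm i l)⁻¹ =
      -(1 / (N : ℝ)) * ∑ μ,
        (dgout p (om μ l) (y μ l) (Vml am cm rm sm μ l) * ((rm μ i) ^ 2 + sm μ i)
          + (gout p (om μ l) (y μ l) (Vml am cm rm sm μ l)) ^ 2 * sm μ i))
    (hTm : ∀ i l, Tm i l = Sm i l *
      ((Real.sqrt N)⁻¹ * (∑ μ, gout p (om μ l) (y μ l) (Vml am cm rm sm μ l) * rm μ i)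
        - am i l * ((1 / (N : ℝ)) *
            ∑ μ, (rm μ i) ^ 2 * dgout p (om μ l) (y μ l) (Vml am cm rm sm μ l))
        - am i l * ((1 / (N : ℝ)) *
            ∑ μ, sm μ i * (gout p (om μ l) (y μ l) (Vml am cm rm sm μ l)) ^ 2)))
    -- (iv) fixed-point equations for Z and W
    (hZinv : ∀ μ i, (Zm μ i)⁻¹ =
      -(1 / (N : ℝ)) * ∑ l,
        (dgout p (om μ l) (y μ l) (Vml am cm rm sm μ l) * ((am i l) ^ 2 + cm i l)
          + (gout p (om μ l) (y μ l) (Vml am cm rm sm μ l)) ^ 2 * cm i l))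
    (hWm : ∀ μ i, Wm μ i = Zm μ i *
      ((Real.sqrt N)⁻¹ * (∑ l, gout p (om μ l) (y μ l) (Vml am cm rm sm μ l) * am i l)
        - rm μ i * ((1 / (N : ℝ)) *
            ∑ l, (am i l) ^ 2 * dgout p (om μ l) (y μ l) (Vml am cm rm sm μ l))
        - rm μ i * ((1 / (N : ℝ)) *
            ∑ l, cm i l * (gout p (om μ l) (y μ l) (Vml am cm rm sm μ l)) ^ 2)))
    -- regularity of the local partition functions (differentiation under the integral)
    (hZout_dω : ∀ (yv V : ℝ), 0 < V → ∀ w : ℝ,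
      HasDerivAt (fun w' => Real.log (Zout p yv w' V)) (gout p w yv V) w)
    (hZout_dV : ∀ (yv w V : ℝ), 0 < V →
      HasDerivAt (fun v => Real.log (Zout p yv w v))
        ((1 / 2) * ((gout p w yv V) ^ 2 + dgout p w yv V)) V)
    (hZX_dT : ∀ (S T : ℝ), 0 < S →
      HasDerivAt (fun t => Real.log (ZhatX PX S t)) ((fa PX S T - T) / S) T)
    (hZX_dS : ∀ (S T : ℝ), 0 < S →
      HasDerivAt (fun s => Real.log (ZhatX PX s T))
        ((fc PX S T + (fa PX S T - T) ^ 2) / (2 * S ^ 2)) S)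
    (hZF_dW : ∀ (Z W : ℝ), 0 < Z →
      HasDerivAt (fun w => Real.log (ZhatF PF N Z w)) ((fr PF N Z W - W) / Z) W)
    (hZF_dZ : ∀ (Z W : ℝ), 0 < Z →
      HasDerivAt (fun z => Real.log (ZhatF PF N z W))
        ((fs PF N Z W + (fr PF N Z W - W) ^ 2) / (2 * Z ^ 2)) Z) :
    -- conclusion: all partial derivatives of Φ^Bethe_AMP vanish at the fixed point
    (∀ i l, HasDerivAt
      (fun v => PhiBetheAMP PX PF p N M P y (upd Tm i l v) Sm Wm Zm om am cm rm sm)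
      0 (Tm i l)) ∧
    (∀ i l, HasDerivAt
      (fun v => PhiBetheAMP PX PF p N M P y Tm (upd Sm i l v) Wm Zm om am cm rm sm)
      0 (Sm i l)) ∧
    (∀ μ i, HasDerivAt
      (fun v => PhiBetheAMP PX PF p N M P y Tm Sm (upd Wm μ i v) Zm om am cm rm sm)
      0 (Wm μ i)) ∧
    (∀ μ i, HasDerivAt
      (fun v => PhiBetheAMP PX PF p N M P y Tm Sm Wm (upd Zm μ i v) om am cm rm sm)
      0 (Zm μ i)) ∧
    (∀ μ l, HasDerivAt
      (fun v => PhiBetheAMP PX PF p N M P y Tm Sm Wm Zm (upd om μ l v) am cm rm sm)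
      0 (om μ l)) ∧
    (∀ i l, HasDerivAt
      (fun v => PhiBetheAMP PX PF p N M P y Tm Sm Wm Zm om (upd am i l v) cm rm sm)
      0 (am i l)) ∧
    (∀ i l, HasDerivAt
      (fun v => PhiBetheAMP PX PF p N M P y Tm Sm Wm Zm om am (upd cm i l v) rm sm)
      0 (cm i l)) ∧
    (∀ μ i, HasDerivAt
      (fun v => PhiBetheAMP PX PF p N M P y Tm Sm Wm Zm om am cm (upd rm μ i v) sm)
      0 (rm μ i)) ∧
    (∀ μ i, HasDerivAt
      (fun v => PhiBetheAMP PX PF p N M P y Tm Sm Wm Zm om am cm rm (upd sm μ i v))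
      0 (sm μ i)) := by
  let g μ l := gout p (om μ l) (y μ l) (Vml am cm rm sm μ l)
  let g' μ l := dgout p (om μ l) (y μ l) (Vml am cm rm sm μ l)
  have hV μ l : 0 < Vml am cm rm sm μ l := Vml_pos (fun j => hcm j l) (fun j => hsm μ j) (hD μ l)
  have hL μ l := hZout_dV (y μ l) (om μ l) _ (hV μ l)
  have hD₀ μ l := (hD μ l).ne'
  refine ⟨fun i l => ?_, fun i l => ?_, fun μ i => ?_, fun μ i => ?_, fun μ l => ?_,
    fun i l => ?_, fun i l => ?_, fun μ i => ?_, fun μ i => ?_⟩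
  · exact PhiBetheAMP_hasDerivAt_T i l (hfa i l ▸ hZX_dT _ _ (hSm i l))
  · exact PhiBetheAMP_hasDerivAt_S i l (hSm i l).ne' (hfa i l ▸ hfc i l ▸ hZX_dS _ _ (hSm i l))
  · exact PhiBetheAMP_hasDerivAt_W μ i (hfr μ i ▸ hZF_dW _ _ (hZm μ i))
  · exact PhiBetheAMP_hasDerivAt_Z μ i (hZm μ i).ne' (hfr μ i ▸ hfs μ i ▸ hZF_dZ _ _ (hZm μ i))
  · exact PhiBetheAMP_hasDerivAt_ω μ l (hZout_dω _ _ (hV μ l) _) (hom μ l)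
  · exact PhiBetheAMP_hasDerivAt_a g g' i l (hSm i l).ne' (hD₀ · l) (hL · l) (hom · l)
      (hSinv i l) (hTm i l)
  · exact PhiBetheAMP_hasDerivAt_c g g' i l (hD₀ · l) (hL · l) (hom · l) (hSinv i l)
  · exact PhiBetheAMP_hasDerivAt_r g g' μ i (hZm μ i).ne' (hD₀ μ) (hL μ) (hom μ)
      (hZinv μ i) (hWm μ i)
  · exact PhiBetheAMP_hasDerivAt_s g g' μ i (hD₀ μ) (hL μ) (hom μ) (hZinv μ i)

/-- **Bethe/AMP correspondence.**  Any fixed point of the AMP equations for matrix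
factorization is a stationary point of the fixed-point-generating Bethe free entropy
`Φ^Bethe_AMP`: every partial derivative of `Φ^Bethe_AMP` with respect to each of the
scalar variables `T_{il}, Σ_{il}, W_{μi}, Z_{μi}, ω_{μl}, a_{il}, c_{il}, r_{μi}, s_{μi}`
vanishes at the fixed point. -/
theorem amp_fixed_point_is_stationary_point_of_bethe_free_entropy
    (N M P : ℕ) (hN : 0 < N) (hM : 0 < M) (hP : 0 < P)
    (PX PF : Measure ℝ) [IsProbabilityMeasure PX] [IsProbabilityMeasure PF]
    (p : ℝ → ℝ → ℝ) (hp : Measurable (Function.uncurry p)) (hpnn : ∀ y z, 0 ≤ p y z)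
    (y : Fin M → Fin P → ℝ)
    (Tm Sm am cm : Fin N → Fin P → ℝ) (Wm Zm rm sm : Fin M → Fin N → ℝ)
    (om : Fin M → Fin P → ℝ)
    -- positivity/nonnegativity of the variance-like variables
    (hSm : ∀ i l, 0 < Sm i l) (hZm : ∀ μ i, 0 < Zm μ i)
    (hcm : ∀ i l, 0 ≤ cm i l) (hsm : ∀ μ i, 0 ≤ sm μ i)
    -- (i) input fixed-point equations
    (hfa : ∀ i l, am i l = fa PX (Sm i l) (Tm i l))
    (hfc : ∀ i l, cm i l = fc PX (Sm i l) (Tm i l))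
    (hfr : ∀ μ i, rm μ i = fr PF N (Zm μ i) (Wm μ i))
    (hfs : ∀ μ i, sm μ i = fs PF N (Zm μ i) (Wm μ i))
    -- (ii) positivity of D_{μl} and the ω fixed-point equation
    (hD : ∀ μ l, 0 < Vml am cm rm sm μ l - (1 / (N : ℝ)) * ∑ i, sm μ i * cm i l)
    (hom : ∀ μ l,
      gout p (om μ l) (y μ l) (Vml am cm rm sm μ l)
        + (om μ l - (Real.sqrt N)⁻¹ * ∑ i, rm μ i * am i l)
            / (Vml am cm rm sm μ l - (1 / (N : ℝ)) * ∑ i, sm μ i * cm i l) = 0)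
    -- (iii) fixed-point equations for Σ and T
    (hSinv : ∀ i l, (Sm i l)⁻¹ =
      -(1 / (N : ℝ)) * ∑ μ,
        (dgout p (om μ l) (y μ l) (Vml am cm rm sm μ l) * ((rm μ i) ^ 2 + sm μ i)
          + (gout p (om μ l) (y μ l) (Vml am cm rm sm μ l)) ^ 2 * sm μ i))
    (hTm : ∀ i l, Tm i l = Sm i l *
      ((Real.sqrt N)⁻¹ * (∑ μ, gout p (om μ l) (y μ l) (Vml am cm rm sm μ l) * rm μ i)
        - am i l * ((1 / (N : ℝ)) *
            ∑ μ, (rm μ i) ^ 2 * dgout p (om μ l) (y μ l) (Vml am cm rm sm μ l))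
        - am i l * ((1 / (N : ℝ)) *
            ∑ μ, sm μ i * (gout p (om μ l) (y μ l) (Vml am cm rm sm μ l)) ^ 2)))
    -- (iv) fixed-point equations for Z and W
    (hZinv : ∀ μ i, (Zm μ i)⁻¹ =
      -(1 / (N : ℝ)) * ∑ l,
        (dgout p (om μ l) (y μ l) (Vml am cm rm sm μ l) * ((am i l) ^ 2 + cm i l)
          + (gout p (om μ l) (y μ l) (Vml am cm rm sm μ l)) ^ 2 * cm i l))
    (hWm : ∀ μ i, Wm μ i = Zm μ i *
      ((Real.sqrt N)⁻¹ * (∑ l, gout p (om μ l) (y μ l) (Vml am cm rm sm μ l) * am i l)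
        - rm μ i * ((1 / (N : ℝ)) *
            ∑ l, (am i l) ^ 2 * dgout p (om μ l) (y μ l) (Vml am cm rm sm μ l))
        - rm μ i * ((1 / (N : ℝ)) *
            ∑ l, cm i l * (gout p (om μ l) (y μ l) (Vml am cm rm sm μ l)) ^ 2)))
    -- regularity of the local partition functions (differentiation under the integral)
    (hZout_pos : ∀ (yv w V : ℝ), 0 < V → 0 < Zout p yv w V)
    (hZout_dω : ∀ (yv V : ℝ), 0 < V → ∀ w : ℝ,
      HasDerivAt (fun w' => Real.log (Zout p yv w' V)) (gout p w yv V) w)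
    (hZout_dV : ∀ (yv w V : ℝ), 0 < V →
      HasDerivAt (fun v => Real.log (Zout p yv w v))
        ((1 / 2) * ((gout p w yv V) ^ 2 + dgout p w yv V)) V)
    (hgout_diff : ∀ (yv V : ℝ), 0 < V → ∀ w : ℝ,
      DifferentiableAt ℝ (fun w' => gout p w' yv V) w)
    (hZX_dT : ∀ (S T : ℝ), 0 < S →
      HasDerivAt (fun t => Real.log (ZhatX PX S t)) ((fa PX S T - T) / S) T)
    (hZX_dS : ∀ (S T : ℝ), 0 < S →
      HasDerivAt (fun s => Real.log (ZhatX PX s T))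
        ((fc PX S T + (fa PX S T - T) ^ 2) / (2 * S ^ 2)) S)
    (hZF_dW : ∀ (Z W : ℝ), 0 < Z →
      HasDerivAt (fun w => Real.log (ZhatF PF N Z w)) ((fr PF N Z W - W) / Z) W)
    (hZF_dZ : ∀ (Z W : ℝ), 0 < Z →
      HasDerivAt (fun z => Real.log (ZhatF PF N z W))
        ((fs PF N Z W + (fr PF N Z W - W) ^ 2) / (2 * Z ^ 2)) Z) :
    -- conclusion: all partial derivatives of Φ^Bethe_AMP vanish at the fixed point
    (∀ i l, HasDerivAt
      (fun v => PhiBetheAMP PX PF p N M P y (upd Tm i l v) Sm Wm Zm om am cm rm sm)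
      0 (Tm i l)) ∧
    (∀ i l, HasDerivAt
      (fun v => PhiBetheAMP PX PF p N M P y Tm (upd Sm i l v) Wm Zm om am cm rm sm)
      0 (Sm i l)) ∧
    (∀ μ i, HasDerivAt
      (fun v => PhiBetheAMP PX PF p N M P y Tm Sm (upd Wm μ i v) Zm om am cm rm sm)
      0 (Wm μ i)) ∧
    (∀ μ i, HasDerivAt
      (fun v => PhiBetheAMP PX PF p N M P y Tm Sm Wm (upd Zm μ i v) om am cm rm sm)
      0 (Zm μ i)) ∧
    (∀ μ l, HasDerivAt
      (fun v => PhiBetheAMP PX PF p N M P y Tm Sm Wm Zm (upd om μ l v) am cm rm sm)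
      0 (om μ l)) ∧
    (∀ i l, HasDerivAt
      (fun v => PhiBetheAMP PX PF p N M P y Tm Sm Wm Zm om (upd am i l v) cm rm sm)
      0 (am i l)) ∧
    (∀ i l, HasDerivAt
      (fun v => PhiBetheAMP PX PF p N M P y Tm Sm Wm Zm om am (upd cm i l v) rm sm)
      0 (cm i l)) ∧
    (∀ μ i, HasDerivAt
      (fun v => PhiBetheAMP PX PF p N M P y Tm Sm Wm Zm om am cm (upd rm μ i v) sm)
      0 (rm μ i)) ∧
    (∀ μ i, HasDerivAt
      (fun v => PhiBetheAMP PX PF p N M P y Tm Sm Wm Zm om am cm rm (upd sm μ i v))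
      0 (sm μ i)) :=
  amp_fixed_point_is_stationary_point_of_bethe_free_entropy_general N M P PX PF p y Tm Sm am cm Wm
    Zm rm sm om hSm hZm hcm hsm hfa hfc hfr hfs hD hom hSinv hTm hZinv hWm hZout_dω hZout_dV hZX_dT
    hZX_dS hZF_dW hZF_dZ

end
end

section
/- General Nishimori identity. Let Θ and 𝒴 be measurable spaces, μ a probability measure on Θ (the prior on the signal), K a Markov kernel from Θ to 𝒴 (the observation channel), ρ = μ ⊗ K the joint law of (signal, data) on Θ × 𝒴, and ν the second marginal of ρ (the law of the data). Let π be a Markov kernel from 𝒴 to Θ that is a posterior for (μ, K), i.e. the joint law of (θ, y) under ρ coincides with the law obtained by drawing y ∼ ν and then θ ∼ π(y). Then for every bounded measurable function A : Θ × Θ → ℝ, ∫_{Θ×𝒴} ( ∫_Θ A(θ⁰, θ) π(y)(dθ) ) ρ(d(θ⁰, y)) = ∫_𝒴 ( ∫_Θ ∫_Θ A(θ₁, θ₂) π(y)(dθ₁) π(y)(dθ₂) ) ν(dy). In words: the disorder average of the thermodynamic average of a function of the true signal and one posterior sample equals the disorder average of the double thermodynamic average of the same function evaluated on two independent posterior samples.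 -/
open MeasureTheory ProbabilityTheory

/-- General Nishimori identity: if `ρ = μ ⊗ K` is the joint law of (signal, data),
`ν` its data marginal and `post` a posterior kernel (i.e. the joint law of `(θ, y)` under
`ρ` coincides with drawing `y ∼ ν` and then `θ ∼ post(y)`), then for every bounded
measurable `A : Θ × Θ → ℝ`, the disorder average of the thermodynamic average of
`A(θ⁰, ·)` equals the disorder average of the double thermodynamic average of `A`. -/
theorem nishimori_identity {Θ Y : Type*} [MeasurableSpace Θ] [MeasurableSpace Y]
    (μ : Measure Θ) [IsProbabilityMeasure μ]
    (K : Kernel Θ Y) [IsMarkovKernel K]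
    (post : Kernel Y Θ) [IsMarkovKernel post]
    (ρ : Measure (Θ × Y)) (hρ : ρ = μ.compProd K)
    (ν : Measure Y) (hν : ν = ρ.map Prod.snd)
    (hpost : ρ = (ν.compProd post).map Prod.swap)
    (A : Θ → Θ → ℝ) (hA : Measurable (Function.uncurry A))
    (C : ℝ) (hC : ∀ θ θ', |A θ θ'| ≤ C) :
    ∫ p, (∫ θ, A p.1 θ ∂(post p.2)) ∂ρ
      = ∫ y, (∫ θ₁, ∫ θ₂, A θ₁ θ₂ ∂(post y) ∂(post y)) ∂ν := by
  haveI : IsProbabilityMeasure ρ := by rw [hρ]; infer_instance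
  haveI : IsProbabilityMeasure ν := by
    rw [hν]; exact Measure.isProbabilityMeasure_map measurable_snd.aemeasurable
  -- inner function
  have hg : Measurable fun p : Y × Θ => ∫ θ₂, A p.2 θ₂ ∂(post p.1) := by
    have h1 : Measurable (Function.uncurry fun (p : Y × Θ) (θ₂ : Θ) => A p.2 θ₂) :=
      hA.comp (measurable_fst.snd.prodMk measurable_snd)
    exact (StronglyMeasurable.integral_kernel_prod_right'
      (κ := post.comap Prod.fst measurable_fst) h1.stronglyMeasurable).measurable
  have hint : Integrable (fun p : Y × Θ => ∫ θ₂, A p.2 θ₂ ∂(post p.1)) (ν.compProd post) := by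
    refine Integrable.mono' (integrable_const C) hg.aestronglyMeasurable ?_
    refine Filter.Eventually.of_forall fun p => ?_
    calc ‖∫ θ₂, A p.2 θ₂ ∂(post p.1)‖ ≤ ∫ θ₂, ‖A p.2 θ₂‖ ∂(post p.1) :=
          norm_integral_le_integral_norm _
      _ ≤ ∫ _, C ∂(post p.1) := by
          refine integral_mono_of_nonneg (Filter.Eventually.of_forall fun _ => norm_nonneg _)
            (integrable_const C) (Filter.Eventually.of_forall fun θ₂ => hC p.2 θ₂)
      _ = C := by simp
  rw [hpost, integral_map measurable_swap.aemeasurable]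
  · simp only [Prod.fst_swap, Prod.snd_swap]
    rw [Measure.integral_compProd hint]
  · exact hg.aestronglyMeasurable.comp_measurable measurable_swap |>.congr
      (Filter.Eventually.of_forall fun p => rfl)
end

section
/- Stability of the informative fixed point in noiseless dictionary learning: let 0 < ρ < α and π > 0. The 2×2 real matrix M = [[1/π, 1/(πρ)], [ρ²/α, ρ/α]], which is the linearization of the noiseless (Δ = 0) Bayes-optimal state-evolution update around the informative fixed point m_F = 1, m_x = ρ, has characteristic polynomial λ·(λ − (1/π + ρ/α)); in particular its eigenvalues are 0 and 1/π + ρ/α, and every eigenvalue of M has absolute value strictly less than 1 if and only if π > α/(α − ρ). Hence the zero-MSE fixed point of the state evolution is locally stable exactly above the counting bound π* = α/(α − ρ). -/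
open Polynomial

/-!
A 2×2 matrix `A` has characteristic polynomial `X² - tr A · X + det A`. The linearized
state-evolution map is singular (its second row is `πρ²/α` times its first), so its
spectrum is `{0, tr A}` with `tr A = 1/π + ρ/α`, and stability reduces to the scalar
inequality `1/π + ρ/α < 1`, i.e. `π > α/(α - ρ)`.
-/

namespace Matrix

variable {R K : Type*}

theorem charpoly_fin_two_of_det_eq_zero [CommRing R] [Nontrivial R]
    {A : Matrix (Fin 2) (Fin 2) R} (h : A.det = 0) :
    A.charpoly = X * (X - C A.trace) := by
  rw [charpoly_fin_two, h, C_0, add_zero]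
  ring

theorem spectrum_fin_two_of_det_eq_zero [Field K] {A : Matrix (Fin 2) (Fin 2) K}
    (h : A.det = 0) : spectrum K A = {0, A.trace} := by
  ext r
  rw [mem_spectrum_iff_isRoot_charpoly, charpoly_fin_two_of_det_eq_zero h]
  simp [sub_eq_zero]

end Matrix

noncomputable def stateEvolutionLinearization (α ρ π : ℝ) : Matrix (Fin 2) (Fin 2) ℝ :=
  !![1 / π, 1 / (π * ρ); ρ ^ 2 / α, ρ / α]

theorem det_stateEvolutionLinearization (α ρ π : ℝ) :
    (stateEvolutionLinearization α ρ π).det = 0 := by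
  rw [stateEvolutionLinearization, Matrix.det_fin_two_of]
  rcases eq_or_ne ρ 0 with rfl | hρ
  · simp
  · field_simp
    ring

theorem trace_stateEvolutionLinearization (α ρ π : ℝ) :
    (stateEvolutionLinearization α ρ π).trace = 1 / π + ρ / α :=
  Matrix.trace_fin_two_of _ _ _ _

theorem one_div_add_div_lt_one_iff {α ρ π : ℝ} (hα : 0 < α) (hρα : ρ < α) (hπ : 0 < π) :
    1 / π + ρ / α < 1 ↔ α / (α - ρ) < π :=
  calc 1 / π + ρ / α < 1 ↔ 1 / π < (α - ρ) / α := by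
        rw [sub_div, div_self hα.ne', lt_sub_iff_add_lt]
    _ ↔ 1 / ((α - ρ) / α) < π := one_div_lt hπ (div_pos (sub_pos.mpr hρα) hα)
    _ ↔ α / (α - ρ) < π := by rw [one_div_div]

/-- Stability of the informative fixed point in noiseless dictionary learning: the
linearization `M = [[1/π, 1/(πρ)], [ρ²/α, ρ/α]]` of the state evolution around
`m_F = 1, m_x = ρ` has characteristic polynomial `λ(λ − (1/π + ρ/α))`, eigenvalues
`0` and `1/π + ρ/α`, and all eigenvalues have absolute value `< 1` iff
`π > α/(α − ρ)`. -/
theorem informative_fixed_point_stability_dictionary_learning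
    (α ρ π : ℝ) (hρ : 0 < ρ) (hρα : ρ < α) (hπ : 0 < π)
    (M : Matrix (Fin 2) (Fin 2) ℝ)
    (hM : M = !![1 / π, 1 / (π * ρ); ρ ^ 2 / α, ρ / α]) :
    M.charpoly = X * (X - C (1 / π + ρ / α)) ∧
      spectrum ℝ M = {0, 1 / π + ρ / α} ∧
      ((∀ lam ∈ spectrum ℝ M, |lam| < 1) ↔ α / (α - ρ) < π) := by
  replace hM : M = stateEvolutionLinearization α ρ π := hM
  have hdet : M.det = 0 := hM ▸ det_stateEvolutionLinearization α ρ π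
  have htrace : M.trace = 1 / π + ρ / α := hM ▸ trace_stateEvolutionLinearization α ρ π
  have hα : 0 < α := hρ.trans hρα
  have htrace_pos : 0 < 1 / π + ρ / α := by positivity
  rw [Matrix.charpoly_fin_two_of_det_eq_zero hdet, Matrix.spectrum_fin_two_of_det_eq_zero hdet,
    htrace, ← one_div_add_div_lt_one_iff hα hρα hπ]
  refine ⟨rfl, rfl, ?_⟩
  simp only [Set.forall_mem_insert, Set.mem_singleton_iff, forall_eq, abs_zero, zero_lt_one, true_and,
    abs_of_pos htrace_pos]
end

section
/- Stability of the informative fixed point in noiseless low-rank matrix completion: let ε > 0, α > 0 and π > 0. The 2×2 real matrix M = [[1/(εα), 1/(εα)], [1/(επ), 1/(επ)]], which is the linearization of the noiseless (Δ = 0) Bayes-optimal state-evolution update around the informative fixed point m_x = 1, m_F = 1, has characteristic polynomial λ·(λ − (α + π)/(ε α π)); in particular its eigenvalues are 0 and (α + π)/(ε α π), and every eigenvalue of M has absolute value strictly less than 1 if and only if ε > (α + π)/(α π). Hence the zero-MSE fixed point of the state evolution is locally stable exactly above the counting bound ε* = (α + π)/(α π). -/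
open Polynomial

/-- Stability of the informative fixed point in noiseless low-rank matrix completion: the
linearization `M = [[1/(εα), 1/(εα)], [1/(επ), 1/(επ)]]` of the state evolution around
`m_x = 1, m_F = 1` has characteristic polynomial `λ(λ − (α+π)/(εαπ))`, eigenvalues `0`
and `(α+π)/(εαπ)`, and all eigenvalues have absolute value `< 1` iff
`ε > (α+π)/(απ)`. -/
theorem informative_fixed_point_stability_matrix_completion
    (ε α π : ℝ) (hε : 0 < ε) (hα : 0 < α) (hπ : 0 < π)
    (M : Matrix (Fin 2) (Fin 2) ℝ)
    (hM : M = !![1 / (ε * α), 1 / (ε * α); 1 / (ε * π), 1 / (ε * π)]) :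
    M.charpoly = X * (X - C ((α + π) / (ε * α * π))) ∧
      spectrum ℝ M = {0, (α + π) / (ε * α * π)} ∧
      ((∀ lam ∈ spectrum ℝ M, |lam| < 1) ↔ (α + π) / (α * π) < ε) := by
  subst hM
  set a : ℝ := 1 / (ε * α) with ha
  set b : ℝ := 1 / (ε * π) with hb
  set t : ℝ := (α + π) / (ε * α * π) with htdef
  have hεα : ε * α ≠ 0 := by positivity
  have hεπ : ε * π ≠ 0 := by positivity
  have htab : a + b = t := by
    rw [ha, hb, htdef]
    field_simp
    ring
  have ht_pos : 0 < t := by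
    rw [← htab]; positivity
  -- characteristic polynomial
  have hchar : (!![a, a; b, b]).charpoly = X * (X - C t) := by
    rw [Matrix.charpoly, Matrix.det_fin_two]
    simp [Matrix.charmatrix_apply, Matrix.one_apply]
    have hC : (C a : ℝ[X]) + C b = C t := by rw [← C_add, htab]
    linear_combination (-(X : ℝ[X])) * hC
  -- spectrum
  have hmem : ∀ lam : ℝ, lam ∈ spectrum ℝ (!![a, a; b, b]) ↔ lam = 0 ∨ lam = t := by
    intro lam
    rw [spectrum.mem_iff, Matrix.isUnit_iff_isUnit_det, isUnit_iff_ne_zero, not_not]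
    have : (algebraMap ℝ (Matrix (Fin 2) (Fin 2) ℝ) lam - !![a, a; b, b]).det
        = lam * (lam - t) := by
      rw [Matrix.det_fin_two]
      simp [Matrix.algebraMap_eq_diagonal, Matrix.diagonal_apply]
      linear_combination (-lam) * htab
    rw [this, mul_eq_zero, sub_eq_zero]
  have hspec : spectrum ℝ (!![a, a; b, b]) = {0, t} := by
    ext lam
    simp [hmem lam, Set.mem_insert_iff]
  refine ⟨hchar, hspec, ?_⟩
  rw [hspec]
  constructor
  · intro h
    have := h t (by simp)
    rw [abs_of_pos ht_pos, htdef, div_lt_one (by positivity)] at this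
    rw [div_lt_iff₀ (by positivity)]
    nlinarith
  · intro h lam hlam
    have ht1 : t < 1 := by
      rw [htdef, div_lt_one (by positivity)]
      rw [div_lt_iff₀ (by positivity)] at h
      nlinarith
    rcases hlam with h0 | h1
    · simp [h0]
    · simp only [Set.mem_singleton_iff] at h1
      rw [h1, abs_of_pos ht_pos]
      exact ht1
end

section
/- Per-measurement domination of the variational mean-field free entropy by the variational Bethe free entropy for the AWGN channel: for all real numbers Δ > 0, V ≥ 0, c ≥ 0 and a ∈ ℝ, −a²/(2(Δ + c)) − ½ log(2π(Δ + V)) ≥ −(a² + V)/(2Δ) − ½ log(2πΔ). Consequently, summing over all measurements, the AWGN variational Bethe free entropy Φ^Bethe_AWGN is greater than or equal to the variational mean-field free entropy Φ^VMF_AWGN evaluated at the same point. -/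
/-!
The two free entropies differ term by term in two ways: the Onsager correction `c ≥ 0` only
enlarges the denominator of the residual penalty, and the Bethe log-normaliser exceeds the
mean-field one by `½ log (1 + V/Δ)`, which the tangent line of `log` at `Δ` bounds by the extra
variance penalty `V/(2Δ)` of the mean-field term.
-/

open Real

theorem Real.log_le_log_add_sub_div {x y : ℝ} (hx : 0 < x) (hy : 0 < y) :
    log y ≤ log x + (y - x) / x := by
  have h := log_le_sub_one_of_pos (div_pos hy hx)
  rw [log_div hy.ne' hx.ne', div_sub_one hx.ne'] at h
  linarith

theorem awgn_vmf_term_le_bethe_term {Δ V c : ℝ} (hΔ : 0 < Δ) (hV : 0 ≤ V) (hc : 0 ≤ c) (a : ℝ) :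
    -(a ^ 2 + V) / (2 * Δ) - (1 / 2) * log (2 * π * Δ) ≤
      -(a ^ 2) / (2 * (Δ + c)) - (1 / 2) * log (2 * π * (Δ + V)) := by
  have hresidual : a ^ 2 / (2 * (Δ + c)) ≤ a ^ 2 / (2 * Δ) :=
    div_le_div_of_nonneg_left (sq_nonneg a) (by positivity) (by linarith)
  have hvariance : log (2 * π * (Δ + V)) ≤ log (2 * π * Δ) + V / Δ := by
    have h := log_le_log_add_sub_div (x := 2 * π * Δ) (y := 2 * π * (Δ + V))
      (by positivity) (by positivity)
    rwa [show (2 * π * (Δ + V) - 2 * π * Δ) / (2 * π * Δ) = V / Δ by field_simp; ring] at h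
  have hsplit : -(a ^ 2 + V) / (2 * Δ) = -(a ^ 2 / (2 * Δ)) - V / Δ / 2 := by ring
  rw [hsplit, neg_div]
  linarith

/-- Per-measurement domination of the variational mean-field free entropy by the
variational Bethe free entropy for the AWGN output channel, together with the summed
consequence `Φ^Bethe_AWGN ≥ Φ^VMF_AWGN`. -/
theorem awgn_bethe_dominates_vmf (Δ : ℝ) (hΔ : 0 < Δ) :
    (∀ (V c a : ℝ), 0 ≤ V → 0 ≤ c →
      -(a ^ 2) / (2 * (Δ + c)) - (1 / 2) * Real.log (2 * Real.pi * (Δ + V)) ≥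
        -(a ^ 2 + V) / (2 * Δ) - (1 / 2) * Real.log (2 * Real.pi * Δ)) ∧
    (∀ (ι : Type) (sfin : Finset ι) (V c a : ι → ℝ),
      (∀ i ∈ sfin, 0 ≤ V i) → (∀ i ∈ sfin, 0 ≤ c i) →
      ∑ i ∈ sfin,
          (-(a i ^ 2) / (2 * (Δ + c i)) - (1 / 2) * Real.log (2 * Real.pi * (Δ + V i))) ≥
        ∑ i ∈ sfin,
          (-(a i ^ 2 + V i) / (2 * Δ) - (1 / 2) * Real.log (2 * Real.pi * Δ))) :=
  ⟨fun _ _ a hV hc => awgn_vmf_term_le_bethe_term hΔ hV hc a,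
    fun _ _ _ _ a hV hc => Finset.sum_le_sum fun i hi =>
      awgn_vmf_term_le_bethe_term hΔ (hV i hi) (hc i hi) (a i)⟩
end
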